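/- arXiv:2404.02092 — 5 statements merged into one kernel-verified Lean document; each statement's English description precedes it below -/
import Mathlib

section
/- For any two vectors v, w in ℝ², (‖v+w‖ + ‖v-w‖)² = 4 · max over rotation angles φ of ((R(φ)v)₁² + (R(φ)w)₂²), where R(φ) is the rotation by angle φ and subscripts denote the first and second components. -/
open Real

set_option maxHeartbeats 1000000 in
/-- For any two vectors `v, w ∈ ℝ²`, `(‖v+w‖ + ‖v-w‖)² = 4 · max_φ ((R(φ)v)₁² + (R(φ)w)₂²)`,
where `R(φ)` is the rotation by angle `φ`. -/
theorem stmt0 (v w : EuclideanSpace ℝ (Fin 2)) :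
    IsGreatest
      {x : ℝ | ∃ φ : ℝ,
        x = 4 * ((v 0 * Real.cos φ + v 1 * Real.sin φ) ^ 2 +
                 (-(w 0) * Real.sin φ + w 1 * Real.cos φ) ^ 2)}
      ((‖v + w‖ + ‖v - w‖) ^ 2) := by
  set p := v 0 with hp
  set q := v 1 with hq
  set r := w 0 with hr
  set s := w 1 with hs
  have hna : ‖v + w‖ ^ 2 = (p + r) ^ 2 + (q + s) ^ 2 := by
    rw [EuclideanSpace.norm_eq, Real.sq_sqrt (by positivity)]
    simp [Fin.sum_univ_two, sq_abs]
    rw [hp, hq, hr, hs]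
  have hnb : ‖v - w‖ ^ 2 = (p - r) ^ 2 + (q - s) ^ 2 := by
    rw [EuclideanSpace.norm_eq, Real.sq_sqrt (by positivity)]
    simp [Fin.sum_univ_two, sq_abs]
    rw [hp, hq, hr, hs]
  set na := ‖v + w‖ with hnav
  set nb := ‖v - w‖ with hnbv
  have hna0 : 0 ≤ na := norm_nonneg _
  have hnb0 : 0 ≤ nb := norm_nonneg _
  set D : ℝ := p ^ 2 + s ^ 2 - q ^ 2 - r ^ 2 with hD
  set C : ℝ := 2 * (p * q - r * s) with hC
  -- key polynomial identity
  have key : (na * nb) ^ 2 = D ^ 2 + C ^ 2 := by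
    have h : (na * nb) ^ 2 = (na ^ 2) * (nb ^ 2) := by ring
    rw [h, hna, hnb, hD, hC]; ring
  have hsq : (na + nb) ^ 2 = na ^ 2 + nb ^ 2 + 2 * (na * nb) := by ring
  clear_value p q r s na nb D C
  constructor
  · -- membership
    rcases eq_or_ne (na * nb) 0 with h0 | h0
    · refine ⟨0, ?_⟩
      have hDC : D ^ 2 + C ^ 2 = 0 := by rw [← key, h0]; ring
      have hD0 : D = 0 := by nlinarith [sq_nonneg D, sq_nonneg C]
      simp only [Real.cos_zero, Real.sin_zero]
      rw [hsq, h0, hna, hnb]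
      linear_combination (-2) * hD0 + 2 * hD
    · have hR : 0 < na * nb := lt_of_le_of_ne (by positivity) (Ne.symm h0)
      set z : ℂ := ⟨D, C⟩ with hz
      have hzne : z ≠ 0 := by
        intro h
        rw [Complex.ext_iff] at h
        simp only [hz, Complex.zero_re, Complex.zero_im] at h
        nlinarith [h.1, h.2, key]
      have habs : ‖z‖ = na * nb := by
        have h : ‖z‖ = Real.sqrt (D ^ 2 + C ^ 2) := by
          rw [Complex.norm_def, Complex.normSq_apply]; simp [hz]; ring_nf
        rw [h, ← key, Real.sqrt_sq hR.le]
      have hcos : Real.cos z.arg = D / (na * nb) := by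
        rw [Complex.cos_arg hzne, habs]
      have hsin : Real.sin z.arg = C / (na * nb) := by
        rw [Complex.sin_arg, habs]
      refine ⟨z.arg / 2, ?_⟩
      set c := Real.cos (z.arg / 2) with hc
      set s' := Real.sin (z.arg / 2) with hs'
      have h1 : c ^ 2 + s' ^ 2 = 1 := by
        rw [hc, hs', add_comm]; exact Real.sin_sq_add_cos_sq _
      have h2 : c ^ 2 - s' ^ 2 = D / (na * nb) := by
        rw [← hcos]
        have h : z.arg = 2 * (z.arg / 2) := by ring
        rw [h, Real.cos_two_mul', ← hc, ← hs']
      have h3 : 2 * (s' * c) = C / (na * nb) := by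
        rw [← hsin]
        have h : z.arg = 2 * (z.arg / 2) := by ring
        rw [h, Real.sin_two_mul, ← hc, ← hs']; ring
      have e2 : (c ^ 2 - s' ^ 2) * (na * nb) = D := by
        rw [h2]; exact div_mul_cancel₀ _ h0
      have e3 : 2 * (s' * c) * (na * nb) = C := by
        rw [h3]; exact div_mul_cancel₀ _ h0
      rw [hsq, hna, hnb]
      linear_combination
        (-2 * (p ^ 2 + q ^ 2 + r ^ 2 + s ^ 2)
          - 2 * (na * nb) * (c ^ 2 + s' ^ 2 + 1)) * h1
        + 2 * (c ^ 2 - s' ^ 2) * e2 + 4 * (s' * c) * e3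
        + 2 * (c ^ 2 - s' ^ 2) * hD + 4 * (s' * c) * hC
  · -- upper bound
    rintro x ⟨φ, rfl⟩
    set c := Real.cos φ with hc
    set s' := Real.sin φ with hs'
    have h1 : c ^ 2 + s' ^ 2 = 1 := by
      rw [hc, hs', add_comm]; exact Real.sin_sq_add_cos_sq _
    have hUV : (D * (c ^ 2 - s' ^ 2) + 2 * C * (s' * c)) ^ 2
        + (D * (2 * (s' * c)) - C * (c ^ 2 - s' ^ 2)) ^ 2 = (na * nb) ^ 2 := by
      linear_combination ((D ^ 2 + C ^ 2) * (c ^ 2 + s' ^ 2 + 1)) * h1 - key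
    have hUle : D * (c ^ 2 - s' ^ 2) + 2 * C * (s' * c) ≤ na * nb := by
      nlinarith [sq_nonneg (D * (c ^ 2 - s' ^ 2) + 2 * C * (s' * c) - na * nb),
        sq_nonneg (D * (2 * (s' * c)) - C * (c ^ 2 - s' ^ 2)),
        mul_nonneg hna0 hnb0, hUV]
    have hf : 4 * ((p * c + q * s') ^ 2 + (-r * s' + s * c) ^ 2) =
        (p ^ 2 + q ^ 2 + r ^ 2 + s ^ 2) * 2
          + 2 * (D * (c ^ 2 - s' ^ 2) + 2 * C * (s' * c)) := by
      linear_combination (2 * (p ^ 2 + q ^ 2 + r ^ 2 + s ^ 2)) * h1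
        - 2 * (c ^ 2 - s' ^ 2) * hD - 4 * (s' * c) * hC
    rw [hsq, hna, hnb]
    nlinarith [hUle, hf]
end

section
/- For any two vectors v, w in ℝ³, (‖v+w‖ + ‖v-w‖)² = 4 · sup over R ∈ SO(3) of ((Rv)₁² + (Rw)₂²). -/
lemma perp (x0 x1 x2 : ℝ) :
    ∃ y0 y1 y2 : ℝ, y0^2+y1^2+y2^2 = 1 ∧ x0*y0+x1*y1+x2*y2 = 0 := by
  by_cases h01 : x0^2 + x1^2 = 0
  · have h0 : x0 = 0 := by nlinarith [sq_nonneg x0, sq_nonneg x1]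
    have h1 : x1 = 0 := by nlinarith [sq_nonneg x0, sq_nonneg x1]
    exact ⟨1, 0, 0, by norm_num, by simp [h0, h1]⟩
  · have hpos : 0 < x0^2 + x1^2 := lt_of_le_of_ne (by positivity) (Ne.symm h01)
    have hs2 : (Real.sqrt (x0^2+x1^2))^2 = x0^2+x1^2 := Real.sq_sqrt hpos.le
    refine ⟨-x1 / Real.sqrt (x0^2+x1^2), x0 / Real.sqrt (x0^2+x1^2), 0, ?_, ?_⟩
    · rw [div_pow, div_pow, ← add_div, hs2]
      rw [div_add' _ _ _ (by positivity), div_eq_one_iff_eq (by positivity)]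
      ring
    · field_simp
      ring


lemma bessel (x0 x1 x2 y0 y1 y2 a0 a1 a2 : ℝ)
    (hx : x0^2+x1^2+x2^2 = 1) (hy : y0^2+y1^2+y2^2 = 1)
    (hxy : x0*y0+x1*y1+x2*y2 = 0) :
    (x0*a0+x1*a1+x2*a2)^2 + (y0*a0+y1*a1+y2*a2)^2 ≤ a0^2+a1^2+a2^2 := by
  have key : a0^2+a1^2+a2^2 - (x0*a0+x1*a1+x2*a2)^2 - (y0*a0+y1*a1+y2*a2)^2
      = (x0*(y1*a2-y2*a1) - x1*(y0*a2-y2*a0) + x2*(y0*a1-y1*a0))^2 := by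
    linear_combination
      (-((y0^2+y1^2+y2^2)*(a0^2+a1^2+a2^2) - (y0*a0+y1*a1+y2*a2)^2)) * hx
      + (-((a0^2+a1^2+a2^2) - (x0*a0+x1*a1+x2*a2)^2)) * hy
      + ((x0*y0+x1*y1+x2*y2)*(a0^2+a1^2+a2^2)
          - 2*(x0*a0+x1*a1+x2*a2)*(y0*a0+y1*a1+y2*a2)) * hxy
  nlinarith [sq_nonneg (x0*(y1*a2-y2*a1) - x1*(y0*a2-y2*a0) + x2*(y0*a1-y1*a0)), key]

lemma two_dim (s u t r A B : ℝ) (hA : 0 ≤ A) (hB : 0 ≤ B)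
    (h1 : s^2+u^2 ≤ A^2) (h2 : t^2+r^2 ≤ B^2) :
    (s+t)^2 + (u-r)^2 ≤ (A+B)^2 := by
  have h4 : (s*t-u*r)^2 ≤ A^2*B^2 := by
    nlinarith [sq_nonneg (s*r+u*t), mul_le_mul h1 h2 (by positivity) (sq_nonneg A)]
  have h3 : s*t - u*r ≤ A*B := by
    nlinarith [h4, mul_nonneg hA hB]
  nlinarith [h1, h2, h3]
lemma sq3_eq_zero {p q r : ℝ} (h : p^2+q^2+r^2 = 0) : p = 0 ∧ q = 0 ∧ r = 0 := by
  refine ⟨?_, ?_, ?_⟩ <;>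
    [ (exact pow_eq_zero_iff (n := 2) (by norm_num) |>.mp
        (le_antisymm (by linarith [sq_nonneg q, sq_nonneg r]) (sq_nonneg p)));
      (exact pow_eq_zero_iff (n := 2) (by norm_num) |>.mp
        (le_antisymm (by linarith [sq_nonneg p, sq_nonneg r]) (sq_nonneg q)));
      (exact pow_eq_zero_iff (n := 2) (by norm_num) |>.mp
        (le_antisymm (by linarith [sq_nonneg p, sq_nonneg q]) (sq_nonneg r)))]

lemma construct (a0 a1 a2 b0 b1 b2 A B : ℝ)
    (hA2 : A^2 = a0^2+a1^2+a2^2) (hA : 0 ≤ A)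
    (hB2 : B^2 = b0^2+b1^2+b2^2) (hB : 0 ≤ B) :
    ∃ x0 x1 x2 y0 y1 y2 : ℝ,
      x0^2+x1^2+x2^2 = 1 ∧ y0^2+y1^2+y2^2 = 1 ∧ x0*y0+x1*y1+x2*y2 = 0 ∧
      (A+B)^2 = (x0*(a0+b0)+x1*(a1+b1)+x2*(a2+b2))^2
              + (y0*(a0-b0)+y1*(a1-b1)+y2*(a2-b2))^2 := by
  rcases eq_or_lt_of_le hA with hA0 | hApos
  · -- A = 0, so a = 0
    have ha0 : a0 = 0 := by nlinarith [sq_nonneg a0, sq_nonneg a1, sq_nonneg a2]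
    have ha1 : a1 = 0 := by nlinarith [sq_nonneg a0, sq_nonneg a1, sq_nonneg a2]
    have ha2 : a2 = 0 := by nlinarith [sq_nonneg a0, sq_nonneg a1, sq_nonneg a2]
    rcases eq_or_lt_of_le hB with hB0 | hBpos
    · have hb0 : b0 = 0 := by nlinarith [sq_nonneg b0, sq_nonneg b1, sq_nonneg b2]
      have hb1 : b1 = 0 := by nlinarith [sq_nonneg b0, sq_nonneg b1, sq_nonneg b2]
      have hb2 : b2 = 0 := by nlinarith [sq_nonneg b0, sq_nonneg b1, sq_nonneg b2]
      exact ⟨1, 0, 0, 0, 1, 0, by norm_num, by norm_num, by norm_num,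
        by rw [ha0, ha1, ha2, hb0, hb1, hb2, ← hA0, ← hB0]; norm_num⟩
    · -- x = b/B, y ⊥ x
      have hBne : B ≠ 0 := hBpos.ne'
      have hxunit : (b0/B)^2+(b1/B)^2+(b2/B)^2 = 1 := by
        rw [div_pow, div_pow, div_pow, ← add_div, ← add_div,
          div_eq_one_iff_eq (pow_ne_zero 2 hBne)]
        linear_combination -hB2
      obtain ⟨y0, y1, y2, hyu, hxy⟩ := perp (b0/B) (b1/B) (b2/B)
      refine ⟨b0/B, b1/B, b2/B, y0, y1, y2, hxunit, hyu, hxy, ?_⟩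
      have hyb : b0*y0+b1*y1+b2*y2 = 0 := by
        field_simp at hxy; linarith
      have e1 : (b0/B)*(a0+b0)+(b1/B)*(a1+b1)+(b2/B)*(a2+b2) = A+B := by
        rw [ha0, ha1, ha2, ← hA0]
        rw [div_mul_eq_mul_div, div_mul_eq_mul_div, div_mul_eq_mul_div,
          ← add_div, ← add_div, div_eq_iff hBne]
        linear_combination -hB2
      have e2 : y0*(a0-b0)+y1*(a1-b1)+y2*(a2-b2) = -B*0 := by
        rw [ha0, ha1, ha2]; linear_combination -hyb
      rw [e1, e2]; ring
  · -- A > 0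
    have hAne : A ≠ 0 := hApos.ne'
    by_cases hpar : a0*b0+a1*b1+a2*b2 = A*B
    · -- parallel (or b = 0) : x = a/A, y ⊥ x
      have hsum : (B*a0-A*b0)^2 + (B*a1-A*b1)^2 + (B*a2-A*b2)^2 = 0 := by
        linear_combination (-(B^2))*hA2 - A^2*hB2 - 2*A*B*hpar
      obtain ⟨hp0, hp1, hp2⟩ := sq3_eq_zero hsum
      have hxunit : (a0/A)^2+(a1/A)^2+(a2/A)^2 = 1 := by
        rw [div_pow, div_pow, div_pow, ← add_div, ← add_div,
          div_eq_one_iff_eq (pow_ne_zero 2 hAne)]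
        linear_combination -hA2
      obtain ⟨y0, y1, y2, hyu, hxy⟩ := perp (a0/A) (a1/A) (a2/A)
      refine ⟨a0/A, a1/A, a2/A, y0, y1, y2, hxunit, hyu, hxy, ?_⟩
      have hya : a0*y0+a1*y1+a2*y2 = 0 := by
        field_simp at hxy; linarith
      have hyb : A*(b0*y0+b1*y1+b2*y2) = 0 := by
        linear_combination (-y0)*hp0 - y1*hp1 - y2*hp2 + B*hya
      have hyb' : b0*y0+b1*y1+b2*y2 = 0 := by
        rcases mul_eq_zero.mp hyb with h | h
        · exact absurd h hAne
        · exact h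
      have e1 : (a0/A)*(a0+b0)+(a1/A)*(a1+b1)+(a2/A)*(a2+b2) = A+B := by
        rw [div_mul_eq_mul_div, div_mul_eq_mul_div, div_mul_eq_mul_div,
          ← add_div, ← add_div, div_eq_iff hAne]
        linear_combination -hA2 + hpar
      have e2 : y0*(a0-b0)+y1*(a1-b1)+y2*(a2-b2) = 0 := by
        linear_combination hya - hyb'
      rw [e1, e2]; ring
    · by_cases hanti : a0*b0+a1*b1+a2*b2 = -(A*B)
      · -- antiparallel : y = a/A, x ⊥ y
        have hBpos : 0 < B := by
          rcases eq_or_lt_of_le hB with h | h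
          · exfalso; apply hpar; linear_combination hanti + 2*A*h
          · exact h
        have hsum : (B*a0+A*b0)^2 + (B*a1+A*b1)^2 + (B*a2+A*b2)^2 = 0 := by
          linear_combination (-(B^2))*hA2 - A^2*hB2 + 2*A*B*hanti
        obtain ⟨hp0, hp1, hp2⟩ := sq3_eq_zero hsum
        have hyunit : (a0/A)^2+(a1/A)^2+(a2/A)^2 = 1 := by
          rw [div_pow, div_pow, div_pow, ← add_div, ← add_div,
            div_eq_one_iff_eq (pow_ne_zero 2 hAne)]
          linear_combination -hA2
        obtain ⟨x0, x1, x2, hxu, hyx⟩ := perp (a0/A) (a1/A) (a2/A)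
        have hxa : a0*x0+a1*x1+a2*x2 = 0 := by
          field_simp at hyx; linarith
        have hxb : b0*x0+b1*x1+b2*x2 = 0 := by
          have h : A*(b0*x0+b1*x1+b2*x2) = 0 := by
            linear_combination x0*hp0 + x1*hp1 + x2*hp2 - B*hxa
          rcases mul_eq_zero.mp h with h | h
          · exact absurd h hAne
          · exact h
        refine ⟨x0, x1, x2, a0/A, a1/A, a2/A, hxu, hyunit, ?_, ?_⟩
        · linear_combination hyx
        · have e1 : x0*(a0+b0)+x1*(a1+b1)+x2*(a2+b2) = 0 := by
            linear_combination hxa + hxb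
          have e2 : (a0/A)*(a0-b0)+(a1/A)*(a1-b1)+(a2/A)*(a2-b2) = A+B := by
            rw [div_mul_eq_mul_div, div_mul_eq_mul_div, div_mul_eq_mul_div,
              ← add_div, ← add_div, div_eq_iff hAne]
            linear_combination -hA2 - hanti
          rw [e1, e2]; ring
      · -- main case : |c| < A*B
        have hCS : (a0*b0+a1*b1+a2*b2)^2 ≤ A^2*B^2 := by
          nlinarith [sq_nonneg (a0*b1-a1*b0), sq_nonneg (a0*b2-a2*b0), sq_nonneg (a1*b2-a2*b1)]
        have hABpos : 0 < A*B := by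
          rcases (mul_nonneg hA hB).eq_or_lt with h | h
          · exfalso; apply hpar
            have hc2 : (a0*b0+a1*b1+a2*b2)^2 = 0 := le_antisymm (by nlinarith) (sq_nonneg _)
            have hc0 := pow_eq_zero_iff (n := 2) (by norm_num) |>.mp hc2
            rw [hc0]; exact h
          · exact h
        have hBpos : 0 < B := hB.lt_of_ne fun h => by rw [← h] at hABpos; simp at hABpos
        have hApos' : 0 < A := hA.lt_of_ne fun h => by rw [← h] at hABpos; simp at hABpos
        have habs : |a0*b0+a1*b1+a2*b2| ≤ A*B :=
          abs_le_of_sq_le_sq (by linear_combination hCS) hABpos.le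
        have hcp : 0 < A*B + (a0*b0+a1*b1+a2*b2) := by
          rcases lt_or_eq_of_le (neg_le_of_abs_le habs) with h | h
          · linarith
          · exact absurd h.symm hanti
        have hcm : 0 < A*B - (a0*b0+a1*b1+a2*b2) := by
          rcases lt_or_eq_of_le (le_of_abs_le habs) with h | h
          · linarith
          · exact absurd h hpar
        set c : ℝ := a0*b0+a1*b1+a2*b2 with hcdef
        have hPpos : 0 < 2*A*B*(A*B+c) := by positivity
        have hQpos : 0 < 2*A*B*(A*B-c) := by positivity
        set P : ℝ := Real.sqrt (2*A*B*(A*B+c)) with hPdef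
        set Q : ℝ := Real.sqrt (2*A*B*(A*B-c)) with hQdef
        have hP2 : P^2 = 2*A*B*(A*B+c) := Real.sq_sqrt hPpos.le
        have hQ2 : Q^2 = 2*A*B*(A*B-c) := Real.sq_sqrt hQpos.le
        have hPne : P ≠ 0 := (Real.sqrt_pos.mpr hPpos).ne'
        have hQne : Q ≠ 0 := (Real.sqrt_pos.mpr hQpos).ne'
        refine ⟨(B*a0+A*b0)/P, (B*a1+A*b1)/P, (B*a2+A*b2)/P,
                (B*a0-A*b0)/Q, (B*a1-A*b1)/Q, (B*a2-A*b2)/Q, ?_, ?_, ?_, ?_⟩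
        · rw [div_pow, div_pow, div_pow, ← add_div, ← add_div,
            div_eq_one_iff_eq (pow_ne_zero 2 hPne)]
          linear_combination (-(B^2))*hA2 - A^2*hB2 - hP2
        · rw [div_pow, div_pow, div_pow, ← add_div, ← add_div,
            div_eq_one_iff_eq (pow_ne_zero 2 hQne)]
          linear_combination (-(B^2))*hA2 - A^2*hB2 - hQ2
        · rw [div_mul_div_comm, div_mul_div_comm, div_mul_div_comm,
            ← add_div, ← add_div, div_eq_zero_iff]
          left
          linear_combination (-(B^2))*hA2 + A^2*hB2
        · have n1 : (B*a0+A*b0)/P*(a0+b0) + (B*a1+A*b1)/P*(a1+b1) + (B*a2+A*b2)/P*(a2+b2)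
              = (A+B)*(A*B+c)/P := by
            rw [div_mul_eq_mul_div, div_mul_eq_mul_div, div_mul_eq_mul_div,
              ← add_div, ← add_div, div_eq_div_iff hPne hPne]
            linear_combination ((-B)*hA2 - A*hB2)*P
          have n2 : (B*a0-A*b0)/Q*(a0-b0) + (B*a1-A*b1)/Q*(a1-b1) + (B*a2-A*b2)/Q*(a2-b2)
              = (A+B)*(A*B-c)/Q := by
            rw [div_mul_eq_mul_div, div_mul_eq_mul_div, div_mul_eq_mul_div,
              ← add_div, ← add_div, div_eq_div_iff hQne hQne]
            linear_combination ((-B)*hA2 - A*hB2)*Q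
          rw [n1, n2, div_pow, div_pow, hP2, hQ2,
            div_add_div _ _ hPpos.ne' hQpos.ne', eq_div_iff (mul_ne_zero hPpos.ne' hQpos.ne')]
          ring

-- SO3 from orthonormal rows x y, third row cross product
lemma mkSO3 (x0 x1 x2 y0 y1 y2 : ℝ)
    (hx : x0^2+x1^2+x2^2 = 1) (hy : y0^2+y1^2+y2^2 = 1)
    (hxy : x0*y0+x1*y1+x2*y2 = 0) :
    (Matrix.of ![![x0,x1,x2], ![y0,y1,y2],
      ![x1*y2-x2*y1, x2*y0-x0*y2, x0*y1-x1*y0]]) ∈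
      Matrix.specialOrthogonalGroup (Fin 3) ℝ := by
  rw [Matrix.mem_specialOrthogonalGroup_iff]
  constructor
  · rw [Matrix.mem_orthogonalGroup_iff]
    ext i j
    fin_cases i <;> fin_cases j <;>
      simp [Matrix.mul_apply, Matrix.star_apply, Fin.sum_univ_three, Matrix.one_apply] <;>
      nlinarith [hx, hy, hxy]
  · simp [Matrix.det_fin_three]
    nlinarith [hx, hy, hxy]

lemma upper_scalar (x0 x1 x2 y0 y1 y2 v0 v1 v2 w0 w1 w2 A B : ℝ)
    (hx : x0^2+x1^2+x2^2 = 1) (hy : y0^2+y1^2+y2^2 = 1)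
    (hxy : x0*y0+x1*y1+x2*y2 = 0)
    (hA2 : A^2 = (v0+w0)^2+(v1+w1)^2+(v2+w2)^2) (hA : 0 ≤ A)
    (hB2 : B^2 = (v0-w0)^2+(v1-w1)^2+(v2-w2)^2) (hB : 0 ≤ B) :
    4*((x0*v0+x1*v1+x2*v2)^2+(y0*w0+y1*w1+y2*w2)^2) ≤ (A+B)^2 := by
  have b1 := bessel x0 x1 x2 y0 y1 y2 (v0+w0) (v1+w1) (v2+w2) hx hy hxy
  have b2 := bessel x0 x1 x2 y0 y1 y2 (v0-w0) (v1-w1) (v2-w2) hx hy hxy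
  have key := two_dim (x0*(v0+w0)+x1*(v1+w1)+x2*(v2+w2)) (y0*(v0+w0)+y1*(v1+w1)+y2*(v2+w2))
    (x0*(v0-w0)+x1*(v1-w1)+x2*(v2-w2)) (y0*(v0-w0)+y1*(v1-w1)+y2*(v2-w2)) A B hA hB
    (by rw [hA2]; exact b1) (by rw [hB2]; exact b2)
  linarith [key]

/-- For any two vectors `v, w ∈ ℝ³`,
`(‖v+w‖ + ‖v-w‖)² = 4 · sup_{R ∈ SO(3)} ((Rv)₁² + (Rw)₂²)`. -/
theorem stmt3 (v w : EuclideanSpace ℝ (Fin 3)) :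
    IsGreatest
      {x : ℝ | ∃ R : Matrix (Fin 3) (Fin 3) ℝ, R ∈ Matrix.specialOrthogonalGroup (Fin 3) ℝ ∧
        x = 4 * ((R.mulVec v 0) ^ 2 + (R.mulVec w 1) ^ 2)}
      ((‖v + w‖ + ‖v - w‖) ^ 2) := by
  have hA2 : ‖v + w‖^2 = (v 0 + w 0)^2 + (v 1 + w 1)^2 + (v 2 + w 2)^2 := by
    rw [EuclideanSpace.norm_eq, Real.sq_sqrt (by positivity)]
    simp [Fin.sum_univ_three, sq_abs]
  have hB2 : ‖v - w‖^2 = (v 0 - w 0)^2 + (v 1 - w 1)^2 + (v 2 - w 2)^2 := by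
    rw [EuclideanSpace.norm_eq, Real.sq_sqrt (by positivity)]
    simp [Fin.sum_univ_three, sq_abs]
  constructor
  · -- membership
    obtain ⟨x0, x1, x2, y0, y1, y2, hx, hy, hxy, hval⟩ :=
      construct (v 0 + w 0) (v 1 + w 1) (v 2 + w 2) (v 0 - w 0) (v 1 - w 1) (v 2 - w 2)
        ‖v + w‖ ‖v - w‖ hA2 (norm_nonneg _) hB2 (norm_nonneg _)
    refine ⟨_, mkSO3 x0 x1 x2 y0 y1 y2 hx hy hxy, ?_⟩
    have hm1 : (Matrix.of ![![x0,x1,x2], ![y0,y1,y2],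
        ![x1*y2-x2*y1, x2*y0-x0*y2, x0*y1-x1*y0]]).mulVec v 0
        = x0 * v 0 + x1 * v 1 + x2 * v 2 := by
      simp [Matrix.mulVec, dotProduct, Fin.sum_univ_three]
    have hm2 : (Matrix.of ![![x0,x1,x2], ![y0,y1,y2],
        ![x1*y2-x2*y1, x2*y0-x0*y2, x0*y1-x1*y0]]).mulVec w 1
        = y0 * w 0 + y1 * w 1 + y2 * w 2 := by
      simp [Matrix.mulVec, dotProduct, Fin.sum_univ_three]
    rw [hm1, hm2]
    linear_combination hval
  · -- upper bound
    rintro r ⟨R, hR, rfl⟩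
    rw [Matrix.mem_specialOrthogonalGroup_iff] at hR
    obtain ⟨hO, _⟩ := hR
    rw [Matrix.mem_orthogonalGroup_iff] at hO
    have h00 := congrFun (congrFun hO 0) 0
    have h11 := congrFun (congrFun hO 1) 1
    have h01 := congrFun (congrFun hO 0) 1
    simp [Matrix.mul_apply, Matrix.star_apply, Fin.sum_univ_three, Matrix.one_apply] at h00 h11 h01
    have hm1 : R.mulVec v 0 = R 0 0 * v 0 + R 0 1 * v 1 + R 0 2 * v 2 := by
      simp [Matrix.mulVec, dotProduct, Fin.sum_univ_three]
    have hm2 : R.mulVec w 1 = R 1 0 * w 0 + R 1 1 * w 1 + R 1 2 * w 2 := by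
      simp [Matrix.mulVec, dotProduct, Fin.sum_univ_three]
    rw [hm1, hm2]
    exact upper_scalar (R 0 0) (R 0 1) (R 0 2) (R 1 0) (R 1 1) (R 1 2)
      (v 0) (v 1) (v 2) (w 0) (w 1) (w 2) ‖v + w‖ ‖v - w‖
      (by linear_combination h00) (by linear_combination h11) (by linear_combination h01)
      hA2 (norm_nonneg _) hB2 (norm_nonneg _)
end

section
/- Let μ₁ ≥ μ₂ ≥ μ₃ ≥ 0 and set βᵢ = ½ μᵢ σᵢ for i = 1,2,3. Then max over R ∈ SO(3) of (‖(Rβ)₁‖₁² + ‖(Rβ)₂‖₁²) = μ₁² + μ₂², where (Rβ)_a = Σ_b R_{ab} β_b and ‖·‖₁ is the trace norm. Consequently ‖(Rβ)_a‖₁² = Σ_b μ_b² R_{ab}² for each a. -/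
open Matrix

/-- The Pauli matrices `σ₁, σ₂, σ₃`. -/
def pauli : Fin 3 → Matrix (Fin 2) (Fin 2) ℂ :=
  ![!![0, 1; 1, 0], !![0, -Complex.I; Complex.I, 0], !![1, 0; 0, -1]]

open scoped Classical in
/-- The trace norm (sum of absolute values of eigenvalues) of a Hermitian matrix. -/
noncomputable def traceNorm {d : ℕ} (M : Matrix (Fin d) (Fin d) ℂ) : ℝ :=
  if h : M.IsHermitian then ∑ i, |h.eigenvalues i| else 0

lemma trace_eq_sum_eig {n : ℕ} {A : Matrix (Fin n) (Fin n) ℂ} (hA : A.IsHermitian) :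
    A.trace = ∑ i, (hA.eigenvalues i : ℂ) := by
  conv_lhs => rw [hA.spectral_theorem, Unitary.conjStarAlgAut_apply]
  rw [Matrix.trace_mul_cycle, Matrix.mem_unitaryGroup_iff'.mp hA.eigenvectorUnitary.2,
    Matrix.one_mul, Matrix.trace_diagonal]
  rfl

lemma trace_sq_eq_sum_eig_sq {n : ℕ} {A : Matrix (Fin n) (Fin n) ℂ} (hA : A.IsHermitian) :
    (A * A).trace = ∑ i, (hA.eigenvalues i : ℂ) ^ 2 := by
  have hU : star (hA.eigenvectorUnitary : Matrix (Fin n) (Fin n) ℂ) *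
      (hA.eigenvectorUnitary : Matrix (Fin n) (Fin n) ℂ) = 1 :=
    Matrix.mem_unitaryGroup_iff'.mp hA.eigenvectorUnitary.2
  conv_lhs => rw [hA.spectral_theorem, Unitary.conjStarAlgAut_apply]
  simp only [Matrix.mul_assoc]
  rw [← Matrix.mul_assoc (star (hA.eigenvectorUnitary : Matrix (Fin n) (Fin n) ℂ)), hU,
    Matrix.one_mul, Matrix.trace_mul_comm]
  simp only [Matrix.mul_assoc]
  rw [hU, Matrix.mul_one, Matrix.diagonal_mul_diagonal, Matrix.trace_diagonal]
  simp [sq]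

lemma traceNorm_sq_of_trace_zero {A : Matrix (Fin 2) (Fin 2) ℂ} (hA : A.IsHermitian)
    (h0 : A.trace = 0) : traceNorm A ^ 2 = 2 * ((A * A).trace).re := by
  rw [traceNorm, dif_pos hA]
  have h1 : hA.eigenvalues 0 + hA.eigenvalues 1 = 0 := by
    have := trace_eq_sum_eig hA
    rw [h0, Fin.sum_univ_two] at this
    exact_mod_cast this.symm
  have h2 : ((A * A).trace).re = hA.eigenvalues 0 ^ 2 + hA.eigenvalues 1 ^ 2 := by
    have := trace_sq_eq_sum_eig_sq hA
    rw [Fin.sum_univ_two] at this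
    rw [this]
    simp [← Complex.ofReal_pow]
  rw [h2, Fin.sum_univ_two]
  have h3 : hA.eigenvalues 1 = -hA.eigenvalues 0 := by linarith
  rw [h3, abs_neg]
  rcases abs_cases (hA.eigenvalues 0) with ⟨h, _⟩ | ⟨h, _⟩ <;> rw [h] <;> ring

lemma sigma_matrix_traceNorm_sq (x y z : ℝ) :
    traceNorm !![(z : ℂ), x - y * Complex.I; x + y * Complex.I, -z] ^ 2
      = 4 * (x ^ 2 + y ^ 2 + z ^ 2) := by
  set A : Matrix (Fin 2) (Fin 2) ℂ :=
    !![(z : ℂ), x - y * Complex.I; x + y * Complex.I, -z] with hAdef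
  have hA : A.IsHermitian := by
    rw [Matrix.IsHermitian]
    ext i j
    fin_cases i <;> fin_cases j <;>
      simp [hAdef, Matrix.conjTranspose_apply, Complex.ext_iff]
  have h0 : A.trace = 0 := by
    simp [hAdef, Matrix.trace_fin_two]
  have h2 : (A * A).trace = ((2 * (x ^ 2 + y ^ 2 + z ^ 2) : ℝ) : ℂ) := by
    simp [hAdef, Matrix.trace_fin_two, Matrix.mul_apply, Fin.sum_univ_two]
    ring_nf
    rw [Complex.I_sq]
    ring
  rw [traceNorm_sq_of_trace_zero hA h0, h2, Complex.ofReal_re]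
  ring

lemma row_formula (μ : Fin 3 → ℝ) (β : Fin 3 → Matrix (Fin 2) (Fin 2) ℂ)
    (hβ : ∀ i, β i = ((μ i / 2 : ℝ) : ℂ) • pauli i) (r : Fin 3 → ℝ) :
    traceNorm (∑ b : Fin 3, (r b : ℂ) • β b) ^ 2 = ∑ b : Fin 3, μ b ^ 2 * r b ^ 2 := by
  have hS : (∑ b : Fin 3, (r b : ℂ) • β b) =
      !![((μ 2 * r 2 / 2 : ℝ) : ℂ), (μ 0 * r 0 / 2 : ℝ) - (μ 1 * r 1 / 2 : ℝ) * Complex.I;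
         (μ 0 * r 0 / 2 : ℝ) + (μ 1 * r 1 / 2 : ℝ) * Complex.I, -((μ 2 * r 2 / 2 : ℝ) : ℂ)] := by
    ext i j
    fin_cases i <;> fin_cases j <;>
      · simp [hβ, pauli, Fin.sum_univ_three]
        ring
  rw [hS, sigma_matrix_traceNorm_sq, Fin.sum_univ_three]
  ring

/-- For `μ₁ ≥ μ₂ ≥ μ₃ ≥ 0` and `βᵢ = ½ μᵢ σᵢ`,
`max_{R ∈ SO(3)} (‖(Rβ)₁‖₁² + ‖(Rβ)₂‖₁²) = μ₁² + μ₂²`; moreover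
`‖(Rβ)_a‖₁² = Σ_b μ_b² R_{ab}²` for every `R` and `a`. -/
theorem stmt14 (μ : Fin 3 → ℝ) (hμ12 : μ 0 ≥ μ 1) (hμ23 : μ 1 ≥ μ 2) (hμ3 : μ 2 ≥ 0)
    (β : Fin 3 → Matrix (Fin 2) (Fin 2) ℂ)
    (hβ : ∀ i, β i = ((μ i / 2 : ℝ) : ℂ) • pauli i) :
    IsGreatest
      {x : ℝ | ∃ R : Matrix (Fin 3) (Fin 3) ℝ, R ∈ Matrix.specialOrthogonalGroup (Fin 3) ℝ ∧
        x = traceNorm (∑ b : Fin 3, (R 0 b : ℂ) • β b) ^ 2 +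
            traceNorm (∑ b : Fin 3, (R 1 b : ℂ) • β b) ^ 2}
      (μ 0 ^ 2 + μ 1 ^ 2) ∧
    ∀ R : Matrix (Fin 3) (Fin 3) ℝ, R ∈ Matrix.specialOrthogonalGroup (Fin 3) ℝ →
      ∀ a : Fin 3,
        traceNorm (∑ b : Fin 3, (R a b : ℂ) • β b) ^ 2 = ∑ b : Fin 3, μ b ^ 2 * R a b ^ 2 := by
  constructor
  · constructor
    · refine ⟨1, one_mem _, ?_⟩
      rw [row_formula μ β hβ ((1 : Matrix (Fin 3) (Fin 3) ℝ) 0),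
        row_formula μ β hβ ((1 : Matrix (Fin 3) (Fin 3) ℝ) 1)]
      simp [Fin.sum_univ_three, Matrix.one_apply]
    · rintro x ⟨R, hR, rfl⟩
      rw [row_formula μ β hβ (R 0), row_formula μ β hβ (R 1)]
      have hcol : ∀ b : Fin 3, R 0 b ^ 2 + R 1 b ^ 2 + R 2 b ^ 2 = 1 := by
        intro b
        have h := hR.1.1
        have := congrFun (congrFun h b) b
        simpa [Matrix.mul_apply, Matrix.one_apply, Fin.sum_univ_three, sq] using this
      have hrow : ∀ a : Fin 3, R a 0 ^ 2 + R a 1 ^ 2 + R a 2 ^ 2 = 1 := by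
        intro a
        have h := hR.1.2
        have := congrFun (congrFun h a) a
        simpa [Matrix.mul_apply, Matrix.one_apply, Fin.sum_univ_three, sq] using this
      simp only [Fin.sum_univ_three]
      have hw0 : R 0 0 ^ 2 + R 1 0 ^ 2 ≤ 1 := by linarith [hcol 0, sq_nonneg (R 2 0)]
      have hw1 : R 0 1 ^ 2 + R 1 1 ^ 2 ≤ 1 := by linarith [hcol 1, sq_nonneg (R 2 1)]
      have hm0 : μ 2 ^ 2 ≤ μ 0 ^ 2 := by nlinarith
      have hm1 : μ 2 ^ 2 ≤ μ 1 ^ 2 := by nlinarith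
      nlinarith [mul_nonneg (sub_nonneg.2 hm0) (sub_nonneg.2 hw0),
        mul_nonneg (sub_nonneg.2 hm1) (sub_nonneg.2 hw1), hrow 0, hrow 1]
  · intro R _ a
    exact row_formula μ β hβ (R a)
end

section
/- Let β₁, β₂, β₃ be d×d Hermitian matrices. Then for every R ∈ SO(3), ‖(Rβ)₁‖₁² + ‖(Rβ)₂‖₁² ≤ d·Σ_{a=1}^{3}‖β_a‖₂². (Upper bound on the maximal CHSH value: B ≤ 2√(d·Σ_a ‖β_a‖₂²).) -/
open Matrix

lemma frob_nonneg {d : ℕ} (A : Matrix (Fin d) (Fin d) ℂ) :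
    0 ≤ ((Aᴴ * A).trace).re := by
  simp only [Matrix.trace, Matrix.diag, Matrix.mul_apply, Matrix.conjTranspose_apply,
    Complex.re_sum]
  apply Finset.sum_nonneg; intro i _
  apply Finset.sum_nonneg; intro j _
  have : (starRingEnd ℂ) (A j i) * A j i = ((Complex.normSq (A j i) : ℝ) : ℂ) := by
    rw [mul_comm, Complex.mul_conj]
  simp [this, Complex.normSq_nonneg]

lemma traceNorm_sq_le {d : ℕ} (M : Matrix (Fin d) (Fin d) ℂ) (h : M.IsHermitian) :
    traceNorm M ^ 2 ≤ (d : ℝ) * ((Mᴴ * M).trace).re := by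
  classical
  have htr : traceNorm M = ∑ i, |h.eigenvalues i| := by
    rw [traceNorm, dif_pos h]
  have key : ((Mᴴ * M).trace).re = ∑ i, h.eigenvalues i ^ 2 := by
    set U : Matrix (Fin d) (Fin d) ℂ := (h.eigenvectorUnitary : Matrix (Fin d) (Fin d) ℂ)
    set D : Matrix (Fin d) (Fin d) ℂ := diagonal (RCLike.ofReal ∘ h.eigenvalues)
    have hU : star U * U = 1 := h.eigenvectorUnitary.2.1
    have hMM : Mᴴ * M = U * (D * D) * star U := by
      calc Mᴴ * M = (U * D * star U) * (U * D * star U) := by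
              rw [h.eq]; exact congrArg₂ (· * ·) h.spectral_theorem h.spectral_theorem
        _ = U * (D * D) * star U := by
              simp only [mul_assoc]
              rw [← mul_assoc (star U) U, hU, one_mul]
    rw [hMM, Matrix.trace_mul_cycle, ← mul_assoc, hU, one_mul]
    simp [D, Matrix.diagonal_mul_diagonal, Matrix.trace_diagonal, ← Complex.ofReal_mul,
      Complex.re_sum, sq]
  rw [htr, key]
  have := sq_sum_le_card_mul_sum_sq (s := Finset.univ) (f := fun i => |h.eigenvalues i|)
  simpa [sq_abs] using this

/-- For Hermitian `β₁, β₂, β₃` and every `R ∈ SO(3)`,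
`‖(Rβ)₁‖₁² + ‖(Rβ)₂‖₁² ≤ d · Σ_{a=1}^{3} ‖β_a‖₂²`. -/
theorem stmt16 {d : ℕ} (β : Fin 3 → Matrix (Fin d) (Fin d) ℂ)
    (hβ : ∀ a, (β a).IsHermitian)
    (R : Matrix (Fin 3) (Fin 3) ℝ) (hR : R ∈ Matrix.specialOrthogonalGroup (Fin 3) ℝ) :
    traceNorm (∑ b : Fin 3, (R 0 b : ℂ) • β b) ^ 2 +
        traceNorm (∑ b : Fin 3, (R 1 b : ℂ) • β b) ^ 2 ≤
      (d : ℝ) * ∑ a : Fin 3, (((β a)ᴴ * β a).trace).re := by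
  classical
  set T : Fin 3 → Fin 3 → ℝ := fun b c => (((β b)ᴴ * β c).trace).re with hT
  set M : Fin 3 → Matrix (Fin d) (Fin d) ℂ := fun a => ∑ b, (R a b : ℂ) • β b with hM
  have hHerm : ∀ a, (M a).IsHermitian := by
    intro a
    simp only [hM, Matrix.IsHermitian, conjTranspose_sum, conjTranspose_smul]
    refine Finset.sum_congr rfl fun b _ => ?_
    rw [(hβ b).eq]
    simp [Complex.conj_ofReal, Complex.coe_smul]
  have expand : ∀ a, (((M a)ᴴ * M a).trace).re = ∑ b, ∑ c, R a b * R a c * T b c := by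
    intro a
    have h1 : (M a)ᴴ * M a = ∑ b, ∑ c, ((R a b : ℂ) * (R a c : ℂ)) • ((β b)ᴴ * β c) := by
      simp only [hM, conjTranspose_sum, conjTranspose_smul, Finset.sum_mul, Finset.mul_sum,
        Matrix.smul_mul, Matrix.mul_smul, smul_smul]
      rw [Finset.sum_comm]
      simp [Complex.conj_ofReal, Complex.ofReal_mul, mul_comm]
    rw [h1]
    simp only [Matrix.trace_sum, Matrix.trace_smul, Complex.re_sum]
    refine Finset.sum_congr rfl fun b _ => Finset.sum_congr rfl fun c _ => ?_
    rw [← Complex.ofReal_mul]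
    simp [hT, Complex.re_ofReal_mul, smul_eq_mul]
  have horth : ∀ b c, ∑ a, R a b * R a c = if b = c then (1:ℝ) else 0 := by
    rw [Matrix.mem_specialOrthogonalGroup_iff] at hR
    have h1 := (Matrix.mem_orthogonalGroup_iff' (Fin 3) ℝ).mp hR.1
    intro b c
    have h2 := congrFun (congrFun h1 b) c
    simpa [Matrix.mul_apply, Matrix.one_apply, Matrix.star_apply] using h2
  have hsum : ∑ a, (((M a)ᴴ * M a).trace).re = ∑ b, T b b := by
    simp only [expand]
    have : ∑ a : Fin 3, ∑ b, ∑ c, R a b * R a c * T b c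
        = ∑ b : Fin 3, ∑ c, (∑ a, R a b * R a c) * T b c := by
      rw [Finset.sum_comm]
      refine Finset.sum_congr rfl fun b _ => ?_
      rw [Finset.sum_comm]
      exact Finset.sum_congr rfl fun c _ => (Finset.sum_mul _ _ _).symm
    rw [this]
    simp [horth, ite_mul]
  have hle : (((M 0)ᴴ * M 0).trace).re + (((M 1)ᴴ * M 1).trace).re ≤ ∑ b, T b b := by
    rw [← hsum, Fin.sum_univ_three]
    have := frob_nonneg (M 2)
    linarith
  have t0 := traceNorm_sq_le (M 0) (hHerm 0)
  have t1 := traceNorm_sq_le (M 1) (hHerm 1)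
  have hd : (0:ℝ) ≤ (d:ℝ) := Nat.cast_nonneg d
  calc traceNorm (M 0) ^ 2 + traceNorm (M 1) ^ 2
      ≤ (d:ℝ) * ((((M 0)ᴴ * M 0).trace).re + (((M 1)ᴴ * M 1).trace).re) := by
        rw [mul_add]; exact add_le_add t0 t1
    _ ≤ (d:ℝ) * ∑ b, T b b := by
        exact mul_le_mul_of_nonneg_left hle hd
    _ = (d : ℝ) * ∑ a : Fin 3, (((β a)ᴴ * β a).trace).re := rfl
end

section
/- Let ρ be a density matrix on ℂ²⊗ℂ^d with decomposition ρ = ½(I₂⊗β₀ + Σᵢσᵢ⊗βᵢ) and define B² ≤ 4d·Σ_{a=1}^{3}‖β_a‖₂² for the maximal CHSH value B. If B > 2 (CHSH violation) then Tr(ρ²) > ½(Tr(ρ_B²) + 1/d) ≥ 1/d, where ρ_B = β₀ is the reduced state on ℂ^d. Formally: Tr(ρ²) ≥ ½(Tr(β₀²) + B²/(4d)), and Tr(β₀²) ≥ 1/d. -/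
/-!
The Pauli matrices are traceless and trace-orthogonal (`Tr σᵢσⱼ = 2δᵢⱼ`), so for
`ρ = ½(I₂⊗β₀ + Σᵢ σᵢ⊗βᵢ)` all cross terms of `Tr ρ²` vanish and `Tr ρ² = ½(Tr β₀² + Σᵢ Tr βᵢ²)`,
while `Tr ρ = 1` forces `Tr β₀ = 1`. Cauchy–Schwarz on the diagonal of `β₀` then gives
`1 = (Tr β₀)² ≤ d · Tr β₀²`.
-/

open Matrix Kronecker
open scoped ComplexOrder

lemma trace_pauli (i : Fin 3) : (pauli i).trace = 0 := by
  fin_cases i <;> simp [pauli, trace_fin_two]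

lemma trace_pauli_mul_pauli (i j : Fin 3) :
    (pauli i * pauli j).trace = if i = j then 2 else 0 := by
  fin_cases i <;> fin_cases j <;> simp [pauli, trace_fin_two, Complex.ext_iff] <;> norm_num

section PauliExpansion

variable {n : Type*} [Fintype n] (β0 : Matrix n n ℂ) (β : Fin 3 → Matrix n n ℂ)

def pauliExpansion : Matrix (Fin 2 × n) (Fin 2 × n) ℂ :=
  (1 : Matrix (Fin 2) (Fin 2) ℂ) ⊗ₖ β0 + ∑ i : Fin 3, pauli i ⊗ₖ β i

lemma trace_pauliExpansion : (pauliExpansion β0 β).trace = 2 * β0.trace := by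
  simp [pauliExpansion, trace_add, trace_sum, trace_kronecker, trace_pauli]

lemma trace_pauliExpansion_mul_self :
    (pauliExpansion β0 β * pauliExpansion β0 β).trace =
      2 * ((β0 * β0).trace + ∑ i : Fin 3, (β i * β i).trace) := by
  simp only [pauliExpansion, add_mul, mul_add, Finset.sum_mul, Finset.mul_sum, trace_add,
    trace_sum, ← mul_kronecker_mul, trace_kronecker, Matrix.one_mul, Matrix.mul_one,
    trace_pauli, trace_pauli_mul_pauli, trace_one, zero_mul, Finset.sum_const_zero, ite_mul]
  simp [Finset.sum_ite_eq']

end PauliExpansion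

lemma Matrix.re_trace_conjTranspose_mul_self {n : Type*} [Fintype n] (A : Matrix n n ℂ) :
    ((Aᴴ * A).trace).re = ∑ i, ∑ j, Complex.normSq (A j i) := by
  simp [trace, mul_apply, Complex.re_sum, Complex.normSq_apply]

lemma Matrix.sq_re_trace_le_card_mul_re_trace_conjTranspose_mul_self {n : Type*} [Fintype n]
    (A : Matrix n n ℂ) :
    (A.trace.re) ^ 2 ≤ Fintype.card n * ((Aᴴ * A).trace).re := by
  have hdiag : ∑ i, (A i i).re ^ 2 ≤ ∑ i, ∑ j, Complex.normSq (A j i) := by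
    refine Finset.sum_le_sum fun i _ => ?_
    calc (A i i).re ^ 2 ≤ Complex.normSq (A i i) := by
          rw [Complex.normSq_apply]; nlinarith [sq_nonneg (A i i).im]
      _ ≤ ∑ j, Complex.normSq (A j i) :=
          Finset.single_le_sum (f := fun j => Complex.normSq (A j i))
            (fun j _ => Complex.normSq_nonneg _) (Finset.mem_univ i)
  calc (A.trace.re) ^ 2 = (∑ i, (A i i).re) ^ 2 := by simp [trace, Complex.re_sum]
    _ ≤ Fintype.card n * ∑ i, (A i i).re ^ 2 := sq_sum_le_card_mul_sum_sq
    _ ≤ Fintype.card n * ((Aᴴ * A).trace).re := by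
        rw [re_trace_conjTranspose_mul_self]; gcongr

lemma Matrix.IsHermitian.one_le_card_mul_re_trace_mul_self {n : Type*} [Fintype n]
    {σ : Matrix n n ℂ} (hσ : σ.IsHermitian) (htr : σ.trace = 1) :
    1 ≤ Fintype.card n * ((σ * σ).trace).re := by
  simpa [htr, hσ.eq] using σ.sq_re_trace_le_card_mul_re_trace_conjTranspose_mul_self

theorem stmt17_general {d : ℕ}
    (β0 : Matrix (Fin d) (Fin d) ℂ) (β : Fin 3 → Matrix (Fin d) (Fin d) ℂ)
    (hβ0 : β0.IsHermitian) (hβ : ∀ i, (β i).IsHermitian)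
    (ρ : Matrix (Fin 2 × Fin d) (Fin 2 × Fin d) ℂ)
    (hρdef : ρ = (1 / 2 : ℂ) •
      ((1 : Matrix (Fin 2) (Fin 2) ℂ) ⊗ₖ β0 + ∑ i : Fin 3, (pauli i) ⊗ₖ (β i)))
    (htr : ρ.trace = 1)
    (B : ℝ) (hB : B ^ 2 ≤ 4 * d * ∑ a : Fin 3, (((β a)ᴴ * β a).trace).re) :
    ((ρ * ρ).trace).re ≥ (1 / 2) * (((β0 * β0).trace).re + B ^ 2 / (4 * d)) ∧
      ((β0 * β0).trace).re ≥ 1 / d := by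
  change ρ = (1 / 2 : ℂ) • pauliExpansion β0 β at hρdef
  have htrβ0 : β0.trace = 1 := by
    rw [hρdef, trace_smul, trace_pauliExpansion, smul_eq_mul] at htr
    linear_combination htr
  have hpurity : ((ρ * ρ).trace).re =
      (1 / 2) * (((β0 * β0).trace).re + ∑ i : Fin 3, ((β i * β i).trace).re) := by
    have htrace : (ρ * ρ).trace =
        ((1 / 2 : ℝ) : ℂ) * ((β0 * β0).trace + ∑ i : Fin 3, (β i * β i).trace) := by
      rw [hρdef, smul_mul_smul_comm, trace_smul, trace_pauliExpansion_mul_self, smul_eq_mul]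
      push_cast
      ring
    rw [htrace, Complex.re_ofReal_mul, Complex.add_re, Complex.re_sum]
  have hβ_sq : ∑ a : Fin 3, (((β a)ᴴ * β a).trace).re = ∑ i : Fin 3, ((β i * β i).trace).re :=
    Finset.sum_congr rfl fun a _ => by rw [(hβ a).eq]
  have hβ0_sq := hβ0.one_le_card_mul_re_trace_mul_self htrβ0
  rw [Fintype.card_fin] at hβ0_sq
  have hd : (0 : ℝ) < d := Nat.cast_pos.mpr <| Nat.pos_of_ne_zero <| by
    rintro rfl
    norm_num at hβ0_sq
  refine ⟨?_, by rw [ge_iff_le, div_le_iff₀ hd]; linarith⟩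
  have hB' : B ^ 2 / (4 * d) ≤ ∑ i : Fin 3, ((β i * β i).trace).re := by
    rw [div_le_iff₀ (by positivity), ← hβ_sq]
    linarith
  rw [hpurity]
  linarith

/-- Purity bound for CHSH violation: if `ρ = ½(I₂⊗β₀ + Σᵢ σᵢ⊗βᵢ)` is a density matrix on
`ℂ²⊗ℂ^d` and `B` satisfies `B² ≤ 4d·Σ_a ‖β_a‖₂²`, then
`Tr(ρ²) ≥ ½(Tr(β₀²) + B²/(4d))` and `Tr(β₀²) ≥ 1/d`. -/
theorem stmt17 {d : ℕ} (hd : 0 < d)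
    (β0 : Matrix (Fin d) (Fin d) ℂ) (β : Fin 3 → Matrix (Fin d) (Fin d) ℂ)
    (hβ0 : β0.IsHermitian) (hβ : ∀ i, (β i).IsHermitian)
    (ρ : Matrix (Fin 2 × Fin d) (Fin 2 × Fin d) ℂ)
    (hρdef : ρ = (1 / 2 : ℂ) •
      ((1 : Matrix (Fin 2) (Fin 2) ℂ) ⊗ₖ β0 + ∑ i : Fin 3, (pauli i) ⊗ₖ (β i)))
    (hpsd : ρ.PosSemidef) (htr : ρ.trace = 1)
    (B : ℝ) (hB : B ^ 2 ≤ 4 * d * ∑ a : Fin 3, (((β a)ᴴ * β a).trace).re) :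
    ((ρ * ρ).trace).re ≥ (1 / 2) * (((β0 * β0).trace).re + B ^ 2 / (4 * d)) ∧
      ((β0 * β0).trace).re ≥ 1 / d :=
  stmt17_general β0 β hβ0 hβ ρ hρdef htr B hB
end
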